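/- Classical reductio ad absurdum is derivable in the system C: if both ¬B and B are derivable in C from assumptions Γ together with ¬A, then A is derivable in C from Γ. -/
import Mathlib

/- Milne's system **C** of classical propositional logic with general
introduction and general elimination rules, including Tarski's Rule. -/
inductive Formula : Type
  | atom : ℕ → Formula
  | neg  : Formula → Formula
  | conj : Formula → Formula → Formula
  | disj : Formula → Formula → Formula
  | imp  : Formula → Formula → Formula
  deriving DecidableEq

/-- Derivability `Γ ⊢_C A` in the system **C**.  Discharge of an assumption is
rendered by `insert`ing it into the context of the corresponding premise. -/
inductive Deriv : Set Formula → Formula → Prop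
  | ass {Γ A} : A ∈ Γ → Deriv Γ A
  | andI {Γ A B C} : Deriv Γ A → Deriv Γ B →
      Deriv (insert (Formula.conj A B) Γ) C → Deriv Γ C
  | andE {Γ A B C} : Deriv Γ (Formula.conj A B) →
      Deriv (insert A (insert B Γ)) C → Deriv Γ C
  | orI₁ {Γ A B C} : Deriv Γ A →
      Deriv (insert (Formula.disj A B) Γ) C → Deriv Γ C
  | orI₂ {Γ A B C} : Deriv Γ B →
      Deriv (insert (Formula.disj A B) Γ) C → Deriv Γ C
  | orE {Γ A B C} : Deriv Γ (Formula.disj A B) →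
      Deriv (insert A Γ) C → Deriv (insert B Γ) C → Deriv Γ C
  | impI {Γ A B C} : Deriv Γ B →
      Deriv (insert (Formula.imp A B) Γ) C → Deriv Γ C
  | tr {Γ A B C} : Deriv (insert A Γ) C →
      Deriv (insert (Formula.imp A B) Γ) C → Deriv Γ C
  | impE {Γ A B C} : Deriv Γ (Formula.imp A B) → Deriv Γ A →
      Deriv (insert B Γ) C → Deriv Γ C
  | negI {Γ A C} : Deriv (insert A Γ) C →
      Deriv (insert (Formula.neg A) Γ) C → Deriv Γ C
  | negE {Γ A C} : Deriv Γ (Formula.neg A) → Deriv Γ A → Deriv Γ C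

/-- Classical reductio ad absurdum is derivable in the system
C: if `¬B` and `B` are both derivable from `Γ` together with `¬A`, then `A` is
derivable from `Γ`. -/
theorem classical_reductio_derivable (Γ : Set Formula) (A B : Formula)
    (h₁ : Deriv (insert (Formula.neg A) Γ) (Formula.neg B))
    (h₂ : Deriv (insert (Formula.neg A) Γ) B) :
    Deriv Γ A := by
  exact Deriv.negI (Deriv.ass (Set.mem_insert _ _)) (Deriv.negE h₁ h₂)
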